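/- Let G be a finite connected non-bipartite simple graph with all degrees at least 1, and let k be even. If the average k-level friendship bias for the simple random walk equals zero, then G is regular. -/

import Mathlib

/-!
The matrix `D Pᵏ` (with `D` the diagonal degree matrix) is symmetric, because `D P` is the
adjacency matrix. Using this reversibility and the fact that `Pᵏ` is stochastic, the total bias
`∑ᵢ ∑ⱼ Pᵏᵢⱼ (dⱼ - dᵢ)` symmetrises to `½ ∑ᵢ ∑ⱼ Pᵏᵢⱼ (dᵢ - dⱼ)² / dⱼ`, a sum of nonnegative terms.
So if it vanishes, `dᵢ = dⱼ` whenever `Pᵏᵢⱼ > 0`, i.e. whenever some walk of length `k` joins `i`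
and `j`. As `k` is even and positive, every walk of length two can be padded to length `k` by
going back and forth along an edge, so degrees agree along all even walks; in a connected
non-bipartite graph every two vertices are joined by one.
-/

open Finset Matrix SimpleGraph

namespace Matrix

variable {ι R : Type*} [Fintype ι] [DecidableEq ι]

theorem IsSymm.mul_pow_of_isSymm_mul [CommSemiring R] {D P : Matrix ι ι R} (hD : D.IsSymm)
    (hDP : (D * P).IsSymm) (m : ℕ) : (D * P ^ m).IsSymm := by
  induction m with
  | zero => simpa using hD
  | succ m ih =>
    calc (D * P ^ (m + 1))ᵀ = Pᵀ * (D * P ^ m)ᵀ := by rw [pow_succ, ← mul_assoc, transpose_mul]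
      _ = Pᵀ * Dᵀ * P ^ m := by rw [ih.eq, hD.eq, mul_assoc]
      _ = D * P ^ (m + 1) := by rw [← transpose_mul, hDP.eq, mul_assoc, ← pow_succ']

theorem pow_apply_pos_of_walk [Semiring R] [PartialOrder R] [IsStrictOrderedRing R]
    {G : SimpleGraph ι} {M : Matrix ι ι R} (hM : ∀ i j, 0 ≤ M i j)
    (hG : ∀ i j, G.Adj i j → 0 < M i j) {i j : ι} (p : G.Walk i j) :
    0 < (M ^ p.length) i j := by
  induction p with
  | nil => simp
  | cons h q ih =>
    rw [Walk.length_cons, pow_succ', mul_apply]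
    exact sum_pos' (fun l _ => mul_nonneg (hM _ _) (pow_apply_nonneg hM _ _ _))
      ⟨_, mem_univ _, mul_pos (hG _ _ h) ih⟩

theorem eq_of_pos_of_sum_mulVec_eq_sum {Q : Matrix ι ι ℝ} (hQ : Q ∈ rowStochastic ℝ ι)
    {d : ι → ℝ} (hd : ∀ i, 0 < d i) (hrev : ∀ i j, d i * Q i j = d j * Q j i)
    (hsum : ∑ i, (Q *ᵥ d) i = ∑ i, d i) {i j : ι} (hij : 0 < Q i j) : d i = d j := by
  set T : ι → ι → ℝ := fun i j => Q i j * (d i - d j) ^ 2 / d j with hT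
  have hT_nonneg : ∀ i j, 0 ≤ T i j := fun i j =>
    div_nonneg (mul_nonneg (hQ.1 i j) (sq_nonneg _)) (hd j).le
  have hdrift : ∑ i, ∑ j, Q i j * (d j - d i) = 0 := by
    simpa [mul_sub, sum_sub_distrib, ← sum_mul, sum_row_of_mem_rowStochastic hQ, mulVec,
      dotProduct] using sub_eq_zero.2 hsum
  have hT_sum : ∑ i, ∑ j, T i j = 0 := by
    calc ∑ i, ∑ j, T i j = ∑ i, ∑ j, (Q i j * (d j - d i) + Q j i * (d i - d j)) := by
          refine sum_congr rfl fun i _ => sum_congr rfl fun j _ => ?_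
          have := (hd j).ne'
          rw [hT, div_eq_iff this]
          linear_combination (d i - d j) * hrev i j
      _ = 0 := by
          simp only [sum_add_distrib]
          rw [hdrift, zero_add, sum_comm, hdrift]
  have hTij : T i j = 0 :=
    (sum_eq_zero_iff_of_nonneg fun j _ => hT_nonneg i j).1
      ((sum_eq_zero_iff_of_nonneg fun i _ => sum_nonneg fun j _ => hT_nonneg i j).1 hT_sum i
        (mem_univ i)) j (mem_univ j)
  simpa [hT, hij.ne', (hd j).ne', sub_eq_zero] using hTij

end Matrix

namespace SimpleGraph

variable {V : Type*} {G : SimpleGraph V}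

theorem Connected.exists_walk_even_length (hG : G.Connected) (hG2 : ¬ G.Colorable 2) (u v : V) :
    ∃ p : G.Walk u v, Even p.length := by
  obtain ⟨w, c, hc⟩ : ∃ w, ∃ c : G.Walk w w, ¬ Even c.length := by
    simpa [two_colorable_iff_forall_loop_even] using hG2
  obtain ⟨p⟩ := hG.preconnected u w
  obtain ⟨q⟩ := hG.preconnected w v
  by_cases hpq : Even (p.append q).length
  · exact ⟨_, hpq⟩
  · refine ⟨p.append (c.append q), ?_⟩
    simp only [Walk.length_append, Nat.even_add] at hpq hc ⊢
    tauto

theorem Walk.eq_of_even_length {α : Type*} {f : V → α}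
    (hf : ∀ u v w, G.Adj u v → G.Adj v w → f u = f w) {u v : V} (p : G.Walk u v)
    (hp : Even p.length) : f u = f v := by
  suffices ∀ {u v} (p : G.Walk u v),
      (Even p.length → f u = f v) ∧ (Odd p.length → ∀ w, G.Adj w u → f w = f v) from
    (this p).1 hp
  intro u v p
  induction p with
  | nil => simp
  | cons h q ih =>
    simp only [Walk.length_cons, Nat.even_add_one, Nat.odd_add_one, Nat.not_even_iff_odd,
      Nat.not_odd_iff_even]
    exact ⟨fun hq => ih.2 hq _ h, fun hq w hw => (hf w _ _ hw h).trans (ih.1 hq)⟩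

theorem Adj.exists_loop_length_eq_two_mul {u v : V} (h : G.Adj u v) (m : ℕ) :
    ∃ c : G.Walk u u, c.length = 2 * m := by
  induction m with
  | zero => exact ⟨.nil, rfl⟩
  | succ m ih =>
    obtain ⟨c, hc⟩ := ih
    exact ⟨.cons h (.cons h.symm c), by simp [hc]; ring⟩

variable [Fintype V] [DecidableRel G.Adj]

variable (G) in
noncomputable def randomWalkMatrix : Matrix V V ℝ :=
  of fun i j => G.adjMatrix ℝ i j / G.degree i

theorem randomWalkMatrix_mem_rowStochastic [DecidableEq V] (hG : ∀ i, 0 < G.degree i) :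
    G.randomWalkMatrix ∈ rowStochastic ℝ V := by
  refine mem_rowStochastic_iff_sum.2 ⟨fun i j => ?_, fun i => ?_⟩
  · simp only [randomWalkMatrix, of_apply, adjMatrix_apply]
    positivity
  · have hdeg : (G.degree i : ℝ) ≠ 0 := by exact_mod_cast (hG i).ne'
    simp only [randomWalkMatrix, of_apply, ← sum_div, div_eq_one_iff_eq hdeg]
    simp [adjMatrix_apply, sum_boole, degree, neighborFinset_eq_filter]

theorem randomWalkMatrix_pos_of_adj (hG : ∀ i, 0 < G.degree i) {i j : V} (h : G.Adj i j) :
    0 < G.randomWalkMatrix i j := by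
  simpa [randomWalkMatrix, h] using hG i

theorem diagonal_degree_mul_randomWalkMatrix [DecidableEq V] (hG : ∀ i, 0 < G.degree i) :
    diagonal (fun i => (G.degree i : ℝ)) * G.randomWalkMatrix = G.adjMatrix ℝ := by
  ext i j
  have : (G.degree i : ℝ) ≠ 0 := by exact_mod_cast (hG i).ne'
  simp [randomWalkMatrix, diagonal_mul, mul_div_cancel₀ _ this]

theorem degree_mul_randomWalkMatrix_pow_apply [DecidableEq V] (hG : ∀ i, 0 < G.degree i)
    (m : ℕ) (i j : V) :
    G.degree i * (G.randomWalkMatrix ^ m) i j = G.degree j * (G.randomWalkMatrix ^ m) j i := by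
  have := (isSymm_diagonal _).mul_pow_of_isSymm_mul
    (by rw [diagonal_degree_mul_randomWalkMatrix hG]; exact G.isSymm_adjMatrix) m
  simpa [diagonal_mul] using (this.apply i j).symm

end SimpleGraph

theorem stmt_5 (n : ℕ) (G : SimpleGraph (Fin n)) [DecidableRel G.Adj]
    (hconn : G.Connected) (hnonbip : ¬ G.Colorable 2)
    (hdeg : ∀ i, 1 ≤ G.degree i) (k : ℕ) (hk : Even k) (hk1 : 1 ≤ k)
    (P : Matrix (Fin n) (Fin n) ℝ)
    (hP : ∀ i j, P i j = (G.adjMatrix ℝ) i j / (G.degree i : ℝ))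
    (hzero : (1 / (n : ℝ)) *
      ∑ i, ((∑ j, (P ^ k) i j * (G.degree j : ℝ)) - (G.degree i : ℝ)) = 0) :
    ∀ i j, G.degree i = G.degree j := by
  obtain rfl : P = G.randomWalkMatrix := Matrix.ext hP
  have hn : (n : ℝ) ≠ 0 := Nat.cast_ne_zero.2 (Fin.pos_iff_nonempty.2 hconn.nonempty).ne'
  have hbias : ∑ i, (G.randomWalkMatrix ^ k *ᵥ fun j => (G.degree j : ℝ)) i =
      ∑ i, (G.degree i : ℝ) := by
    simpa [hn, sub_eq_zero, mulVec, dotProduct] using hzero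
  have hwalk : ∀ u w (p : G.Walk u w), p.length = k → G.degree u = G.degree w := by
    rintro u w p rfl
    exact_mod_cast eq_of_pos_of_sum_mulVec_eq_sum
      (pow_mem (randomWalkMatrix_mem_rowStochastic hdeg) _) (fun i => by exact_mod_cast hdeg i)
      (fun i j => by exact_mod_cast degree_mul_randomWalkMatrix_pow_apply hdeg _ i j) hbias
      (pow_apply_pos_of_walk (randomWalkMatrix_mem_rowStochastic hdeg).1
        (fun _ _ => randomWalkMatrix_pos_of_adj hdeg) p)
  obtain ⟨m, rfl⟩ : ∃ m, k = 2 * m + 2 := by obtain ⟨m, rfl⟩ := hk; exact ⟨m - 1, by omega⟩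
  have htwo : ∀ u v w, G.Adj u v → G.Adj v w → G.degree u = G.degree w := by
    intro u v w huv hvw
    obtain ⟨c, hc⟩ := huv.exists_loop_length_eq_two_mul m
    exact hwalk u w (c.append (.cons huv (.cons hvw .nil))) (by simp [hc])
  intro i j
  obtain ⟨p, hp⟩ := hconn.exists_walk_even_length hnonbip i j
  exact p.eq_of_even_length htwo hp
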